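/- arXiv:2104.00637 — 2 statements merged into one kernel-verified Lean document; each statement's English description precedes it below -/
import Mathlib

section
/- Semi-discrete worst transportation optimality (quadratic cost): let μ be a finite Borel measure on ℝ^d with finite second moment, let p₁, …, pₙ ∈ ℝ^d be pairwise distinct, ν₁, …, νₙ > 0 with Σᵢνᵢ = μ(ℝ^d), and suppose h ∈ ℝⁿ satisfies μ(Wᵢ(h)) = νᵢ for all i (Wᵢ(h) the farthest power cells) and the pairwise intersections Wᵢ(h) ∩ Wⱼ(h), i ≠ j, are μ-null. Let T_h be any measurable map with T_h(x) = pᵢ for all x in Wᵢ(h) ∖ ⋃_{j≠i} Wⱼ(h). Then for every measurable map T taking values in {p₁, …, pₙ} with μ(T⁻¹{pᵢ}) = νᵢ for all i, we have ∫ ‖x − T_h(x)‖² dμ(x) ≥ ∫ ‖x − T(x)‖² dμ(x); i.e., T_h maximizes the quadratic transportation cost among all measure-preserving maps from μ to Σᵢ νᵢ δ_{pᵢ}. -/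
open MeasureTheory
open scoped RealInnerProductSpace

/-- The farthest power cell of index `i` for points `p` and heights `h`. -/
def farCell {d n : ℕ} (p : Fin n → EuclideanSpace ℝ (Fin d)) (h : Fin n → ℝ) (i : Fin n) :
    Set (EuclideanSpace ℝ (Fin d)) :=
  {x | ∀ j, ⟪p i, x⟫ + h i ≤ ⟪p j, x⟫ + h j}

/-!
With the potential `ψ(pᵢ) = ‖pᵢ‖² + 2hᵢ` one has `‖x - pⱼ‖² - ψ(pⱼ) = ‖x‖² - 2(⟪pⱼ, x⟫ + hⱼ)`,
so on `Wᵢ(h)` the index `i` maximises `‖x - pⱼ‖² - ψ(pⱼ)`. Hence pointwise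
`‖x - T x‖² - ψ(T x) ≤ ‖x - T_h x‖² - ψ(T_h x)` almost everywhere, and after integration the
potential terms cancel, since `T` and `T_h` push `μ` forward to the same discrete measure.
-/

open Function

section FiniteValued

variable {X E ι : Type*} [MeasurableSpace X] {μ : Measure X} [Fintype ι]
  {A : ι → Set X} {p : ι → E} {S : X → E}

theorem ae_eq_sum_indicator_of_ae_mem (hA : Pairwise (Disjoint on A))
    (hS : ∀ᵐ x ∂μ, ∃ i, x ∈ A i ∧ S x = p i) (F : X → E → ℝ) :
    (fun x => F x (S x)) =ᵐ[μ] fun x => ∑ i, (A i).indicator (fun x => F x (p i)) x := by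
  filter_upwards [hS] with x ⟨i, hxi, hSx⟩
  rw [Finset.sum_eq_single_of_mem i (Finset.mem_univ i) fun j _ hji =>
    Set.indicator_of_notMem (fun hxj => (hA hji).ne_of_mem hxj hxi rfl) _,
    Set.indicator_of_mem hxi, hSx]

theorem integrable_comp_of_ae_mem (hAm : ∀ i, MeasurableSet (A i))
    (hA : Pairwise (Disjoint on A)) (hS : ∀ᵐ x ∂μ, ∃ i, x ∈ A i ∧ S x = p i)
    {F : X → E → ℝ} (hF : ∀ i, Integrable (fun x => F x (p i)) μ) :
    Integrable (fun x => F x (S x)) μ :=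
  (integrable_finsetSum _ fun i _ => (hF i).indicator (hAm i)).congr
    (ae_eq_sum_indicator_of_ae_mem hA hS F).symm

theorem integral_comp_of_ae_mem (hAm : ∀ i, MeasurableSet (A i))
    (hA : Pairwise (Disjoint on A)) (hS : ∀ᵐ x ∂μ, ∃ i, x ∈ A i ∧ S x = p i)
    {F : X → E → ℝ} (hF : ∀ i, Integrable (fun x => F x (p i)) μ) :
    ∫ x, F x (S x) ∂μ = ∑ i, ∫ x in A i, F x (p i) ∂μ := by
  rw [integral_congr_ae (ae_eq_sum_indicator_of_ae_mem hA hS F),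
    integral_finsetSum _ fun i _ => (hF i).indicator (hAm i)]
  simp only [integral_indicator (hAm _)]

theorem integral_comp_le_of_potential [IsFiniteMeasure μ] {B : ι → Set X} {S' : X → E}
    (hAm : ∀ i, MeasurableSet (A i)) (hA : Pairwise (Disjoint on A))
    (hS : ∀ᵐ x ∂μ, ∃ i, x ∈ A i ∧ S x = p i)
    (hBm : ∀ i, MeasurableSet (B i)) (hB : Pairwise (Disjoint on B))
    (hS' : ∀ᵐ x ∂μ, ∃ i, x ∈ B i ∧ S' x = p i) (hAB : ∀ i, μ (A i) = μ (B i))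
    {c : X → E → ℝ} (hc : ∀ i, Integrable (fun x => c x (p i)) μ) (ψ : E → ℝ)
    (hle : ∀ᵐ x ∂μ, c x (S x) - ψ (S x) ≤ c x (S' x) - ψ (S' x)) :
    ∫ x, c x (S x) ∂μ ≤ ∫ x, c x (S' x) ∂μ := by
  have hψ (i : ι) : Integrable (fun _ : X => ψ (p i)) μ := integrable_const _
  have hψS := integrable_comp_of_ae_mem hAm hA hS (F := fun _ y => ψ y) hψ
  have hψS' := integrable_comp_of_ae_mem hBm hB hS' (F := fun _ y => ψ y) hψ
  have hcS := integrable_comp_of_ae_mem hAm hA hS hc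
  have hcS' := integrable_comp_of_ae_mem hBm hB hS' hc
  have hψ_eq : ∫ x, ψ (S x) ∂μ = ∫ x, ψ (S' x) ∂μ := by
    rw [integral_comp_of_ae_mem hAm hA hS (F := fun _ y => ψ y) hψ,
      integral_comp_of_ae_mem hBm hB hS' (F := fun _ y => ψ y) hψ]
    simp only [setIntegral_const, measureReal_def, hAB]
  have hmono : ∫ x, c x (S x) - ψ (S x) ∂μ ≤ ∫ x, c x (S' x) - ψ (S' x) ∂μ :=
    integral_mono_ae (hcS.sub hψS) (hcS'.sub hψS') hle
  rw [integral_sub hcS hψS, integral_sub hcS' hψS'] at hmono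
  linarith

end FiniteValued

theorem integrable_norm_sub_sq {X E : Type*} [MeasurableSpace X] {μ : Measure X}
    [IsFiniteMeasure μ] [NormedAddCommGroup E] {f : X → E} (hf : AEStronglyMeasurable f μ)
    (hf2 : Integrable (fun x => ‖f x‖ ^ 2) μ) (c : E) :
    Integrable (fun x => ‖f x - c‖ ^ 2) μ :=
  (memLp_two_iff_integrable_sq_norm (hf.sub aestronglyMeasurable_const)).1
    (((memLp_two_iff_integrable_sq_norm hf).2 hf2).sub (memLp_const c))

section FarCell

variable {d n : ℕ} (p : Fin n → EuclideanSpace ℝ (Fin d)) (h : Fin n → ℝ)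

theorem isClosed_farCell (i : Fin n) : IsClosed (farCell p h i) := by
  simp only [farCell, Set.ofPred_forall]
  exact isClosed_iInter fun j => isClosed_le (by fun_prop) (by fun_prop)

theorem exists_mem_farCell [NeZero n] (x : EuclideanSpace ℝ (Fin d)) :
    ∃ i, x ∈ farCell p h i := by
  obtain ⟨i, -, hi⟩ :=
    Finset.univ.exists_min_image (fun j => ⟪p j, x⟫ + h j) Finset.univ_nonempty
  exact ⟨i, fun j => hi j (Finset.mem_univ j)⟩

theorem norm_sub_sq_sub_le_of_mem_farCell {x : EuclideanSpace ℝ (Fin d)} {i : Fin n}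
    (hx : x ∈ farCell p h i) (j : Fin n) :
    ‖x - p j‖ ^ 2 - (‖p j‖ ^ 2 + 2 * h j) ≤ ‖x - p i‖ ^ 2 - (‖p i‖ ^ 2 + 2 * h i) := by
  have hij := hx j
  rw [norm_sub_sq_real, norm_sub_sq_real]
  linarith [real_inner_comm x (p i), real_inner_comm x (p j)]

def exclusiveFarCell (i : Fin n) : Set (EuclideanSpace ℝ (Fin d)) :=
  farCell p h i \ ⋃ j ∈ ({i}ᶜ : Set (Fin n)), farCell p h j

theorem measurableSet_exclusiveFarCell (i : Fin n) : MeasurableSet (exclusiveFarCell p h i) :=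
  (isClosed_farCell p h i).measurableSet.diff <|
    .biUnion (Set.to_countable _) fun j _ => (isClosed_farCell p h j).measurableSet

theorem pairwise_disjoint_exclusiveFarCell : Pairwise (Disjoint on exclusiveFarCell p h) :=
  fun _ _ hij => Set.disjoint_left.2 fun _ hxi hxj =>
    hxj.2 (Set.mem_biUnion (Set.mem_compl_singleton_iff.2 hij) hxi.1)

variable {p h} {μ : Measure (EuclideanSpace ℝ (Fin d))}

theorem measure_farCell_inter_biUnion_eq_zero
    (hnull : ∀ i j, i ≠ j → μ (farCell p h i ∩ farCell p h j) = 0) (i : Fin n) :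
    μ (farCell p h i ∩ ⋃ j ∈ ({i}ᶜ : Set (Fin n)), farCell p h j) = 0 := by
  rw [Set.inter_iUnion₂]
  exact (measure_biUnion_null_iff (Set.to_countable _)).2 fun j hj => hnull i j (Ne.symm hj)

theorem measure_exclusiveFarCell (hnull : ∀ i j, i ≠ j → μ (farCell p h i ∩ farCell p h j) = 0)
    (i : Fin n) :
    μ (exclusiveFarCell p h i) = μ (farCell p h i) :=
  measure_sdiff_null' (measure_farCell_inter_biUnion_eq_zero hnull i)

theorem ae_exists_mem_exclusiveFarCell [NeZero n]
    (hnull : ∀ i j, i ≠ j → μ (farCell p h i ∩ farCell p h j) = 0) :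
    ∀ᵐ x ∂μ, ∃ i, x ∈ exclusiveFarCell p h i := by
  have hae := ae_all_iff.2 fun i =>
    measure_eq_zero_iff_ae_notMem.1 (measure_farCell_inter_biUnion_eq_zero hnull i)
  filter_upwards [hae] with x hx
  obtain ⟨i, hxi⟩ := exists_mem_farCell p h x
  exact ⟨i, hxi, fun hx' => hx i ⟨hxi, hx'⟩⟩

end FarCell

theorem stmt_12_general {d n : ℕ}
    (μ : Measure (EuclideanSpace ℝ (Fin d))) [IsFiniteMeasure μ]
    (hμ2 : Integrable (fun x => ‖x‖ ^ 2) μ)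
    (p : Fin n → EuclideanSpace ℝ (Fin d)) (hp : Function.Injective p)
    (ν : Fin n → ℝ)
    (h : Fin n → ℝ)
    (hvol : ∀ i, μ (farCell p h i) = ENNReal.ofReal (ν i))
    (hnull : ∀ i j, i ≠ j → μ (farCell p h i ∩ farCell p h j) = 0)
    (Th : EuclideanSpace ℝ (Fin d) → EuclideanSpace ℝ (Fin d))
    (hTh : ∀ i, ∀ x ∈ farCell p h i \ ⋃ j ∈ ({i}ᶜ : Set (Fin n)), farCell p h j, Th x = p i) :
    ∀ T : EuclideanSpace ℝ (Fin d) → EuclideanSpace ℝ (Fin d),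
      Measurable T → (∀ x, ∃ i, T x = p i) →
      (∀ i, μ (T ⁻¹' {p i}) = ENNReal.ofReal (ν i)) →
      ∫ x, ‖x - T x‖ ^ 2 ∂μ ≤ ∫ x, ‖x - Th x‖ ^ 2 ∂μ := by
  intro T hTm hTval hTvol
  have : NeZero n := ⟨fun hn => by subst hn; exact (hTval 0).elim fun i _ => i.elim0⟩
  have hT : ∀ᵐ x ∂μ, ∃ i, x ∈ T ⁻¹' {p i} ∧ T x = p i :=
    ae_of_all _ fun x => (hTval x).imp fun _ hi => ⟨hi, hi⟩
  have hTh' : ∀ᵐ x ∂μ, ∃ i, x ∈ exclusiveFarCell p h i ∧ Th x = p i :=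
    (ae_exists_mem_exclusiveFarCell hnull).mono fun x =>
      Exists.imp fun i hx => ⟨hx, hTh i x hx⟩
  let ψ : EuclideanSpace ℝ (Fin d) → ℝ := fun y => ‖y‖ ^ 2 + 2 * Function.extend p h 0 y
  have hψ (i : Fin n) : ψ (p i) = ‖p i‖ ^ 2 + 2 * h i := by simp [ψ, hp.extend_apply]
  refine integral_comp_le_of_potential (fun i => hTm (measurableSet_singleton (p i)))
    (fun i j hij => (Set.disjoint_singleton.2 (hp.ne hij)).preimage T) hT
    (measurableSet_exclusiveFarCell p h) (pairwise_disjoint_exclusiveFarCell p h) hTh'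
    (fun i => by rw [hTvol, measure_exclusiveFarCell hnull, hvol]) (c := fun x y => ‖x - y‖ ^ 2)
    (fun i => integrable_norm_sub_sq aestronglyMeasurable_id hμ2 (p i)) ψ ?_
  filter_upwards [hTh'] with x ⟨i, hx, hThx⟩
  obtain ⟨j, hTx⟩ := hTval x
  rw [hTx, hThx, hψ, hψ]
  exact norm_sub_sq_sub_le_of_mem_farCell p h hx.1 j

theorem stmt_12 {d n : ℕ}
    (μ : Measure (EuclideanSpace ℝ (Fin d))) [IsFiniteMeasure μ]
    (hμ2 : Integrable (fun x => ‖x‖ ^ 2) μ)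
    (p : Fin n → EuclideanSpace ℝ (Fin d)) (hp : Function.Injective p)
    (ν : Fin n → ℝ) (hν : ∀ i, 0 < ν i)
    (hmass : ∑ i, ν i = (μ Set.univ).toReal)
    (h : Fin n → ℝ)
    (hvol : ∀ i, μ (farCell p h i) = ENNReal.ofReal (ν i))
    (hnull : ∀ i j, i ≠ j → μ (farCell p h i ∩ farCell p h j) = 0)
    (Th : EuclideanSpace ℝ (Fin d) → EuclideanSpace ℝ (Fin d))
    (hThm : Measurable Th)
    (hTh : ∀ i, ∀ x ∈ farCell p h i \ ⋃ j ∈ ({i}ᶜ : Set (Fin n)), farCell p h j, Th x = p i) :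
    ∀ T : EuclideanSpace ℝ (Fin d) → EuclideanSpace ℝ (Fin d),
      Measurable T → (∀ x, ∃ i, T x = p i) →
      (∀ i, μ (T ⁻¹' {p i}) = ENNReal.ofReal (ν i)) →
      ∫ x, ‖x - T x‖ ^ 2 ∂μ ≤ ∫ x, ‖x - Th x‖ ^ 2 ∂μ :=
  stmt_12_general μ hμ2 p hp ν h hvol hnull Th hTh
end

section
/- Existence in the semi-discrete worst transportation problem: let Ω ⊆ ℝ^d be a compact convex set with nonempty interior, f : Ω → ℝ a positive continuous function, μ the measure with density f on Ω, and p₁, …, pₙ ∈ ℝ^d pairwise distinct points. Then for any ν₁, …, νₙ > 0 with Σᵢ νᵢ = μ(Ω), there exists h ∈ ℝⁿ such that μ(Wᵢ(h) ∩ Ω) = νᵢ for every i, where Wᵢ(h) is the farthest power cell of index i. -/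
/-!
The heights are a maximiser of the dual functional
`Φ(h) = ∫ minⱼ (⟪pⱼ, x⟫ + hⱼ) dμ(x) - ∑ⱼ νⱼ hⱼ`.
Since `∑ⱼ νⱼ = μ(Ω)`, `Φ` is unchanged when a constant is added to all heights, and bounding the
minimum by the term of the smallest height shows that `Φ` decreases linearly in the spread of `h`;
so `Φ` attains its maximum. Raising `hᵢ` by `t` raises the integrand by at least `t` on the new
cell `Wᵢ(h + t eᵢ)`, so at a maximiser `t (μ(Wᵢ(h + t eᵢ)) - νᵢ) ≤ 0` for every `t`. As `t → 0`,
these cells decrease to `Wᵢ(h)` from the left and increase to it from the right up to the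
hyperplanes where two of the affine functions tie; those are Lebesgue-null because the `pⱼ` are
distinct, hence `μ(Wᵢ(h)) = νᵢ`.
-/

open MeasureTheory
open scoped RealInnerProductSpace

/-- The measure with density `f` on `Ω` (with respect to Lebesgue measure). -/
noncomputable def densMeasure {d : ℕ} (Ω : Set (EuclideanSpace ℝ (Fin d)))
    (f : EuclideanSpace ℝ (Fin d) → ℝ) : Measure (EuclideanSpace ℝ (Fin d)) :=
  (volume.restrict Ω).withDensity fun x => ENNReal.ofReal (f x)

open Filter Set Topology
open scoped ENNReal

local notation "ℝ^" d => EuclideanSpace ℝ (Fin d)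

section AntitoneFamily

variable {α : Type*} [MeasurableSpace α] {μ : Measure α} {s : ℝ → Set α} {c : ℝ≥0∞}

theorem measure_eq_of_antitone [IsFiniteMeasure μ] (hs : Antitone s)
    (hsm : ∀ t, NullMeasurableSet (s t) μ)
    (hneg : ∀ t < 0, c ≤ μ (s t)) (hpos : ∀ t > 0, μ (s t) ≤ c)
    (hleft : ⋂ t < 0, s t ⊆ s 0) (hright : μ (s 0 \ ⋃ t > 0, s t) = 0) :
    μ (s 0) = c := by
  apply le_antisymm
  · calc μ (s 0) ≤ μ (⋃ t > 0, s t) := measure_mono_ae (ae_le_set.2 hright)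
      _ = μ (⋃ t : Ioi (0 : ℝ), s t) := by rw [iUnion_subtype]; rfl
      _ = ⨆ t : Ioi (0 : ℝ), μ (s t) := (hs.comp_monotone (Subtype.mono_coe _)).measure_iUnion
      _ ≤ c := iSup_le fun t => hpos t t.2
  · calc c ≤ ⨅ t : Iio (0 : ℝ), μ (s t) := le_iInf fun t => hneg t t.2
      _ = μ (⋂ t : Iio (0 : ℝ), s t) :=
        ((hs.comp_monotone (Subtype.mono_coe _)).measure_iInter (fun t => hsm _)
          ⟨⟨-1, by norm_num⟩, measure_ne_top μ _⟩).symm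
      _ ≤ μ (s 0) := measure_mono (by rw [iInter_subtype]; exact hleft)

end AntitoneFamily

theorem measure_setOf_inner_eq_zero {E : Type*} [NormedAddCommGroup E] [InnerProductSpace ℝ E]
    [MeasurableSpace E] [BorelSpace E] [FiniteDimensional ℝ E] (μ : Measure E)
    [μ.IsAddHaarMeasure] {v : E} (hv : v ≠ 0) (c : ℝ) :
    μ {x | ⟪v, x⟫ = c} = 0 := by
  let H : AffineSubspace ℝ E :=
    { carrier := {x | ⟪v, x⟫ = c}
      smul_vsub_vadd_mem' := fun a x y z hx hy hz => by
        simp_all [inner_add_right, inner_smul_right, inner_sub_right] }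
  refine Measure.addHaar_affineSubspace μ H fun htop => hv ?_
  have h0 : ⟪v, 0⟫ = c := (htop ▸ AffineSubspace.mem_top ℝ E 0 : (0 : E) ∈ H)
  have hv' : ⟪v, v⟫ = c := (htop ▸ AffineSubspace.mem_top ℝ E v : v ∈ H)
  rw [inner_zero_right] at h0
  exact inner_self_eq_zero.1 (hv'.trans h0.symm)

section LowerEnvelope

variable {d n : ℕ} [Nonempty (Fin n)] (p : Fin n → ℝ^d) (h : Fin n → ℝ) (x : ℝ^d)

noncomputable def lowerEnvelope : (ℝ^d) → ℝ :=
  Finset.univ.inf' Finset.univ_nonempty fun j x => ⟪p j, x⟫ + h j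

variable {p h x} in
theorem le_lowerEnvelope_iff {c : ℝ} : c ≤ lowerEnvelope p h x ↔ ∀ j, c ≤ ⟪p j, x⟫ + h j := by
  simp [lowerEnvelope, Finset.inf'_apply]

theorem lowerEnvelope_le (j : Fin n) : lowerEnvelope p h x ≤ ⟪p j, x⟫ + h j :=
  le_lowerEnvelope_iff.1 le_rfl j

theorem exists_lowerEnvelope_eq : ∃ j, lowerEnvelope p h x = ⟪p j, x⟫ + h j := by
  obtain ⟨j, -, hj⟩ := Finset.exists_mem_eq_inf' Finset.univ_nonempty fun j => ⟪p j, x⟫ + h j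
  exact ⟨j, by simpa [lowerEnvelope, Finset.inf'_apply] using hj⟩

variable {p h x} {h' : Fin n → ℝ}

theorem mem_farCell_iff {i : Fin n} : x ∈ farCell p h i ↔ ⟪p i, x⟫ + h i ≤ lowerEnvelope p h x :=
  le_lowerEnvelope_iff.symm

theorem lowerEnvelope_le_of_le_add {c : ℝ} (hle : ∀ j, h j ≤ h' j + c) :
    lowerEnvelope p h x ≤ lowerEnvelope p h' x + c :=
  sub_le_iff_le_add.1 <| le_lowerEnvelope_iff.2 fun j => by
    linarith [lowerEnvelope_le p h x j, hle j]

theorem lowerEnvelope_add_const (c : ℝ) :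
    lowerEnvelope p (h + fun _ => c) x = lowerEnvelope p h x + c := by
  have hle : lowerEnvelope p h x ≤ lowerEnvelope p (h + fun _ => c) x + -c :=
    lowerEnvelope_le_of_le_add fun j => by simp
  exact le_antisymm (lowerEnvelope_le_of_le_add fun _ => le_rfl) (by linarith)

theorem abs_lowerEnvelope_sub_le : |lowerEnvelope p h x - lowerEnvelope p h' x| ≤ dist h h' := by
  have hle : ∀ g g' : Fin n → ℝ, ∀ j, g j ≤ g' j + dist g g' := fun g g' j => by
    linarith [le_abs_self (g j - g' j), (Real.dist_eq _ _).symm.trans_le (dist_le_pi_dist g g' j)]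
  rw [abs_sub_le_iff]
  constructor
  · linarith [lowerEnvelope_le_of_le_add (p := p) (x := x) (hle h h')]
  · linarith [lowerEnvelope_le_of_le_add (p := p) (x := x) (hle h' h), dist_comm h h']

theorem lowerEnvelope_add_indicator_le (i : Fin n) (t : ℝ) :
    lowerEnvelope p h x + (farCell p (h + Pi.single i t) i).indicator (fun _ => t) x
      ≤ lowerEnvelope p (h + Pi.single i t) x := by
  by_cases hx : x ∈ farCell p (h + Pi.single i t) i
  · have hi := mem_farCell_iff.1 hx
    rw [Pi.add_apply, Pi.single_eq_same] at hi
    rw [indicator_of_mem hx]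
    linarith [lowerEnvelope_le p h x i]
  · obtain ⟨k, hk⟩ := exists_lowerEnvelope_eq p (h + Pi.single i t) x
    have hki : k ≠ i := by rintro rfl; exact hx (mem_farCell_iff.2 hk.ge)
    rw [indicator_of_notMem hx, add_zero, hk, Pi.add_apply, Pi.single_eq_of_ne hki, add_zero]
    exact lowerEnvelope_le p h x k

end LowerEnvelope

section Cells

variable {d n : ℕ} (p : Fin n → ℝ^d) (h : Fin n → ℝ) (i : Fin n)

theorem measurableSet_farCell : MeasurableSet (farCell p h i) := by
  simp only [farCell, ofPred_forall]
  exact .iInter fun j => measurableSet_le (by fun_prop) (by fun_prop)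

theorem antitone_farCell_add_single : Antitone fun t : ℝ => farCell p (h + Pi.single i t) i := by
  intro t t' htt x hx j
  rcases eq_or_ne j i with rfl | hji
  · exact le_rfl
  · have hxj := hx j
    simp only [Pi.add_apply, Pi.single_eq_same, Pi.single_eq_of_ne hji, add_zero] at hxj ⊢
    linarith

theorem iInter_farCell_add_single_subset :
    ⋂ t < 0, farCell p (h + Pi.single i t) i ⊆ farCell p h i := by
  intro x hx j
  rcases eq_or_ne j i with rfl | hji
  · exact le_rfl
  refine le_of_forall_pos_le_add fun ε hε => ?_
  have hxj := mem_iInter₂.1 hx (-ε) (neg_lt_zero.2 hε) j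
  simp only [Pi.add_apply, Pi.single_eq_same, Pi.single_eq_of_ne hji, add_zero] at hxj
  linarith

theorem farCell_diff_iUnion_subset :
    farCell p h i \ ⋃ t > 0, farCell p (h + Pi.single i t) i
      ⊆ ⋃ j ≠ i, {x | ⟪p j - p i, x⟫ = h i - h j} := by
  rintro x ⟨hx, hnot⟩
  by_contra hties
  simp only [mem_iUnion, mem_ofPred_eq, not_exists, inner_sub_left] at hties
  have hgap : ∀ j ≠ i, 0 < (⟪p j, x⟫ + h j) - (⟪p i, x⟫ + h i) := fun j hj =>
    sub_pos.2 <| (hx j).lt_of_ne fun heq => hties j hj (by linarith)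
  have hev : ∀ᶠ t in 𝓝[>] (0 : ℝ), 0 < t ∧ ∀ j ≠ i, t < (⟪p j, x⟫ + h j) - (⟪p i, x⟫ + h i) :=
    eventually_mem_nhdsWithin.and <| nhdsWithin_le_nhds <| eventually_all.2 fun j => by
      by_cases hj : j = i
      · exact .of_forall fun _ hj' => absurd hj hj'
      · exact (eventually_lt_nhds (hgap j hj)).mono fun _ ht _ => ht
  obtain ⟨t, ht0, ht⟩ := hev.exists
  refine hnot (mem_iUnion₂.2 ⟨t, ht0, fun j => ?_⟩)
  rcases eq_or_ne j i with rfl | hji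
  · exact le_rfl
  · simp only [Pi.add_apply, Pi.single_eq_same, Pi.single_eq_of_ne hji, add_zero]
    linarith [ht j hji]

end Cells

section DualFunctional

variable {d n : ℕ} [Nonempty (Fin n)] {μ : Measure (ℝ^d)} {p : Fin n → ℝ^d} {ν : Fin n → ℝ}

theorem integrable_lowerEnvelope (hμ : Integrable id μ) [IsFiniteMeasure μ] (h : Fin n → ℝ) :
    Integrable (lowerEnvelope p h) μ :=
  Finset.inf'_induction _ _ (p := (Integrable · μ)) (fun _ hf _ hg => hf.inf hg) fun j _ =>
    (hμ.const_inner (p j)).add (integrable_const _)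

variable (μ p ν) in
noncomputable def dualFunctional (h : Fin n → ℝ) : ℝ :=
  ∫ x, lowerEnvelope p h x ∂μ - ν ⬝ᵥ h

variable [IsFiniteMeasure μ] (hμ : Integrable id μ)
include hμ

theorem continuous_dualFunctional : Continuous (dualFunctional μ p ν) := by
  have hJ : LipschitzWith (μ.real univ).toNNReal fun h => ∫ x, lowerEnvelope p h x ∂μ := by
    refine LipschitzWith.of_dist_le_mul fun h h' => ?_
    rw [Real.dist_eq, ← integral_sub (integrable_lowerEnvelope hμ h)
      (integrable_lowerEnvelope hμ h'), Real.coe_toNNReal _ measureReal_nonneg, mul_comm,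
      ← Real.norm_eq_abs]
    exact norm_integral_le_of_norm_le_const (ae_of_all _ fun x => abs_lowerEnvelope_sub_le)
  exact hJ.continuous.sub <|
    continuous_finsetSum _ fun j _ => continuous_const.mul (continuous_apply j)

theorem dualFunctional_add_const (hmass : ∑ j, ν j = μ.real univ) (h : Fin n → ℝ) (c : ℝ) :
    dualFunctional μ p ν (h + fun _ => c) = dualFunctional μ p ν h := by
  have hν : ν ⬝ᵥ (fun _ => c) = μ.real univ * c := by
    simp [dotProduct, ← Finset.sum_mul, hmass]
  simp only [dualFunctional, lowerEnvelope_add_const]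
  rw [integral_add (integrable_lowerEnvelope hμ h) (integrable_const c), integral_const,
    dotProduct_add, hν, smul_eq_mul]
  ring

theorem dualFunctional_le (hν : ∀ j, 0 ≤ ν j) (hmass : ∑ j, ν j = μ.real univ)
    {h : Fin n → ℝ} {i : Fin n} (hi : ∀ j, h i ≤ h j) (k : Fin n) :
    dualFunctional μ p ν h ≤ ∫ x, ⟪p i, x⟫ ∂μ - ν k * (h k - h i) := by
  have hJ : ∫ x, lowerEnvelope p h x ∂μ ≤ ∫ x, ⟪p i, x⟫ ∂μ + μ.real univ * h i := by
    rw [← smul_eq_mul, ← integral_const, ← integral_add (hμ.const_inner _) (integrable_const _)]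
    exact integral_mono (integrable_lowerEnvelope hμ h)
      ((hμ.const_inner _).add (integrable_const _)) fun x => lowerEnvelope_le p h x i
  have hk : ν k * (h k - h i) ≤ ∑ j, ν j * (h j - h i) :=
    Finset.single_le_sum (fun j _ => mul_nonneg (hν j) (sub_nonneg.2 (hi j))) (Finset.mem_univ k)
  have hsum : ∑ j, ν j * (h j - h i) = ν ⬝ᵥ h - μ.real univ * h i := by
    simp [dotProduct, mul_sub, Finset.sum_sub_distrib, ← Finset.sum_mul, hmass]
  unfold dualFunctional
  linarith

theorem mul_measureReal_farCell_le_integral_sub (h : Fin n → ℝ) (i : Fin n) (t : ℝ) :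
    t * μ.real (farCell p (h + Pi.single i t) i)
      ≤ ∫ x, lowerEnvelope p (h + Pi.single i t) x ∂μ - ∫ x, lowerEnvelope p h x ∂μ := by
  have hW := measurableSet_farCell p (h + Pi.single i t) i
  rw [← integral_sub (integrable_lowerEnvelope hμ _) (integrable_lowerEnvelope hμ h), mul_comm,
    ← smul_eq_mul, ← integral_indicator_const _ hW]
  exact integral_mono ((integrable_const t).indicator hW)
    ((integrable_lowerEnvelope hμ _).sub (integrable_lowerEnvelope hμ h)) fun x => by
      linarith [lowerEnvelope_add_indicator_le (p := p) (h := h) (x := x) i t]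

theorem mul_measureReal_farCell_sub_nonpos {h : Fin n → ℝ}
    (hmax : ∀ g, dualFunctional μ p ν g ≤ dualFunctional μ p ν h) (i : Fin n) (t : ℝ) :
    t * (μ.real (farCell p (h + Pi.single i t) i) - ν i) ≤ 0 := by
  have hJ := mul_measureReal_farCell_le_integral_sub (p := p) hμ h i t
  have hF := hmax (h + Pi.single i t)
  simp only [dualFunctional, dotProduct_add, dotProduct_single] at hF
  linarith

end DualFunctional

theorem exists_forall_le_of_add_const_invariant {ι : Type*} [Fintype ι] [Nonempty ι]
    {F : (ι → ℝ) → ℝ} (hF : Continuous F) (hshift : ∀ h c, F (h + fun _ => c) = F h)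
    {A κ : ι → ℝ} (hκ : ∀ k, 0 < κ k)
    (hdecay : ∀ h i k, (∀ j, h i ≤ h j) → F h ≤ A i - κ k * (h k - h i)) :
    ∃ h, ∀ g, F g ≤ F h := by
  obtain ⟨R, hR0, hR⟩ : ∃ R : ℝ, 0 ≤ R ∧ ∀ i k, A i - κ k * R ≤ F 0 := by
    refine ((eventually_ge_atTop 0).and (eventually_all.2 fun i => eventually_all.2 fun k =>
      (eventually_ge_atTop ((A i - F 0) / κ k)).mono fun R hR => ?_)).exists
    rw [div_le_iff₀ (hκ k)] at hR
    linarith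
  obtain ⟨h, -, hmax⟩ := (isCompact_Icc (a := (0 : ι → ℝ)) (b := fun _ => R)).exists_isMaxOn
    (nonempty_Icc.2 fun _ => hR0) hF.continuousOn
  refine ⟨h, fun g => ?_⟩
  -- Shift `g` so that its least coordinate is `0`: either the shift lies in the box `[0, R]^ι`,
  -- or one of its coordinates exceeds `R` and the decay bound puts its value below `F 0`.
  obtain ⟨i, -, hi⟩ := Finset.exists_min_image Finset.univ g Finset.univ_nonempty
  set g' := g + fun _ => -g i
  have hg'i : g' i = 0 := by simp [g']
  have hg'0 : ∀ j, 0 ≤ g' j := fun j => by simpa [g'] using hi j (Finset.mem_univ j)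
  rw [← hshift g (-g i)]
  by_cases hg' : ∀ k, g' k ≤ R
  · exact hmax ⟨hg'0, hg'⟩
  · push Not at hg'
    obtain ⟨k, hk⟩ := hg'
    calc F g' ≤ A i - κ k * (g' k - g' i) := hdecay g' i k fun j => hg'i ▸ hg'0 j
      _ ≤ A i - κ k * R := by rw [hg'i, sub_zero]; nlinarith [hκ k]
      _ ≤ F 0 := hR i k
      _ ≤ F h := hmax (left_mem_Icc.2 fun _ => hR0)

theorem exists_measure_farCell_eq {d n : ℕ} (μ : Measure (ℝ^d)) [IsFiniteMeasure μ]
    (hμ : Integrable id μ) (hac : μ ≪ volume) {p : Fin n → ℝ^d} (hp : Function.Injective p)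
    {ν : Fin n → ℝ} (hν : ∀ i, 0 < ν i) (hmass : ∑ i, ν i = μ.real univ) :
    ∃ h : Fin n → ℝ, ∀ i, μ (farCell p h i) = ENNReal.ofReal (ν i) := by
  cases isEmpty_or_nonempty (Fin n)
  · exact ⟨0, isEmptyElim⟩
  obtain ⟨h, hmax⟩ := exists_forall_le_of_add_const_invariant
    (continuous_dualFunctional (p := p) hμ) (dualFunctional_add_const hμ hmass) hν
    fun h i k hi => dualFunctional_le hμ (fun j => (hν j).le) hmass hi k
  refine ⟨h, fun i => ?_⟩
  have hopt := mul_measureReal_farCell_sub_nonpos hμ hmax i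
  have hneg : ∀ t < 0, ENNReal.ofReal (ν i) ≤ μ (farCell p (h + Pi.single i t) i) := fun t ht =>
    ENNReal.ofReal_le_of_le_toReal <| by
      rw [← measureReal_def]; linarith [nonneg_of_mul_nonpos_right (hopt t) ht]
  have hpos : ∀ t > 0, μ (farCell p (h + Pi.single i t) i) ≤ ENNReal.ofReal (ν i) := fun t ht =>
    (ENNReal.le_ofReal_iff_toReal_le (measure_ne_top _ _) (hν i).le).2 <| by
      rw [← measureReal_def]; linarith [nonpos_of_mul_nonpos_right (hopt t) ht]
  have hties : μ (⋃ j ≠ i, {x | ⟪p j - p i, x⟫ = h i - h j}) = 0 :=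
    measure_biUnion_null_iff (to_countable _) |>.2 fun j hj =>
      hac (measure_setOf_inner_eq_zero volume (sub_ne_zero.2 (hp.ne hj)) _)
  have hh : h + Pi.single i 0 = h := by rw [Pi.single_zero, add_zero]
  have := measure_eq_of_antitone (antitone_farCell_add_single p h i)
    (fun t => (measurableSet_farCell _ _ _).nullMeasurableSet) hneg hpos
    (by rw [hh]; exact iInter_farCell_add_single_subset p h i)
    (measure_mono_null (by rw [hh]; exact farCell_diff_iUnion_subset p h i) hties)
  rwa [hh] at this

theorem stmt_18_general {d n : ℕ}
    (Ω : Set (EuclideanSpace ℝ (Fin d)))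
    (hΩc : IsCompact Ω)
    (f : EuclideanSpace ℝ (Fin d) → ℝ)
    (hf : ContinuousOn f Ω)
    (p : Fin n → EuclideanSpace ℝ (Fin d)) (hp : Function.Injective p)
    (ν : Fin n → ℝ) (hν : ∀ i, 0 < ν i)
    (hmass : ∑ i, ν i = (densMeasure Ω f Ω).toReal) :
    ∃ h : Fin n → ℝ, ∀ i, densMeasure Ω f (farCell p h i ∩ Ω) = ENNReal.ofReal (ν i) := by
  have : IsFiniteMeasure (densMeasure Ω f) :=
    isFiniteMeasure_withDensity_ofReal (hf.integrableOn_compact hΩc).hasFiniteIntegral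
  have hΩcompl : densMeasure Ω f Ωᶜ = 0 :=
    withDensity_absolutelyContinuous _ _ (by simp [Measure.restrict_apply' hΩc.measurableSet])
  have hμ : Integrable id (densMeasure Ω f) := by
    rw [← Measure.restrict_eq_self_of_ae_mem (mem_ae_iff.2 hΩcompl)]
    exact continuous_id.continuousOn.integrableOn_compact hΩc
  have hac : densMeasure Ω f ≪ volume :=
    (withDensity_absolutelyContinuous _ _).trans <|
      Measure.absolutelyContinuous_of_le Measure.restrict_le_self
  obtain ⟨h, hh⟩ := exists_measure_farCell_eq _ hμ hac hp hν
    (by rw [hmass, measureReal_def, ← measure_inter_conull (s := univ) hΩcompl, univ_inter])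
  exact ⟨h, fun i => by rw [measure_inter_conull hΩcompl, hh i]⟩

theorem stmt_18 {d n : ℕ}
    (Ω : Set (EuclideanSpace ℝ (Fin d)))
    (hΩc : IsCompact Ω) (hΩconv : Convex ℝ Ω) (hΩint : (interior Ω).Nonempty)
    (f : EuclideanSpace ℝ (Fin d) → ℝ)
    (hf : ContinuousOn f Ω) (hfpos : ∀ x ∈ Ω, 0 < f x)
    (p : Fin n → EuclideanSpace ℝ (Fin d)) (hp : Function.Injective p)
    (ν : Fin n → ℝ) (hν : ∀ i, 0 < ν i)
    (hmass : ∑ i, ν i = (densMeasure Ω f Ω).toReal) :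
    ∃ h : Fin n → ℝ, ∀ i, densMeasure Ω f (farCell p h i ∩ Ω) = ENNReal.ofReal (ν i) :=
  stmt_18_general Ω hΩc f hf p hp ν hν hmass
end
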